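/- For every integer k ≥ 1, write ∏_{l=0}^{k−1} σ^l(E_f)(X^{p^l}) = ∑_{l≥0} β_l·X^l with β_l ∈ R', where σ^l(E_f)(X^{p^l}) denotes the series obtained from E_f by applying σ^l to its ℤ_q-coefficients (fixing all variables π_x and X) and then substituting X ↦ X^{p^l}. Then v(β_l) ≥ l/(p^{k−1}·δ) for all l ∈ ℤ_{≥0}. -/

import Mathlib

/-!
Give π_{(i,j)} the weight j and X the weight 0. Each factor E(π_{(i,j)}·[a_{ij}]·X^j) only
involves the monomials (π_{(i,j)} X^j)^n, whose X-degree equals their weight; this survives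
products, the infinite product E_f (coefficientwise a closed condition) and σ^l. The
substitution X ↦ X^{p^l} multiplies X-degrees by p^l ≤ p^{k-1}, so every monomial π^u X^l of
the twisted product has l ≤ p^{k-1}·(weight of u) = p^{k-1}·δ·v(π^u).
-/

open PowerSeries

noncomputable section

open scoped Classical

/-- The series ℓ(T) = ∑_{i≥0} T^{p^i}/p^i over ℚ. -/
def lseries (p : ℕ) : PowerSeries ℚ :=
  PowerSeries.mk fun n => if ∃ i : ℕ, n = p ^ i then (n : ℚ)⁻¹ else 0

/-- Substitution `f(g)` of a power series `g` with zero constant coefficient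
into a power series `f`. -/
def psComp {R : Type*} [CommSemiring R] (g f : PowerSeries R) : PowerSeries R :=
  PowerSeries.mk fun n =>
    ∑ k ∈ Finset.range (n + 1), PowerSeries.coeff k f * PowerSeries.coeff n (g ^ k)

/-- The Artin–Hasse exponential E(T) = exp(∑ T^{p^i}/p^i) over ℚ. -/
def artinHasse (p : ℕ) : PowerSeries ℚ := psComp (lseries p) (PowerSeries.exp ℚ)

/-- The property that `Ep` is the Artin–Hasse exponential regarded as a power
series with coefficients in `ℤ_p`. -/
def IsArtinHasseZp (p : ℕ) [Fact p.Prime] (Ep : PowerSeries ℤ_[p]) : Prop :=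
  PowerSeries.map (PadicInt.Coe.ringHom) Ep
    = PowerSeries.map (Rat.castHom ℚ_[p]) (artinHasse p)

/-- The index set 𝔛. -/
def Xfrak (p m dm : ℕ) : Set (ℕ × ℕ) :=
  {x | x.2 * p ^ m ≤ dm * p ^ x.1 ∧ ¬(0 < x.2 ∧ p ∣ x.2)}

/-- The valuation v, with v(π_{(i,j)}) = j/δ = j·p^m/d_m. -/
def vR {A : Type*} [CommSemiring A] (p m dm : ℕ)
    (r : MvPowerSeries (Xfrak p m dm) A) : WithTop ℚ :=
  if r = 0 then ⊤
  else (((sInf {w : ℕ | ∃ u : (Xfrak p m dm) →₀ ℕ,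
      MvPowerSeries.coeff u r ≠ 0 ∧ w = u.sum fun x k => x.1.2 * k} : ℕ) : ℚ)
    * (p : ℚ) ^ m / (dm : ℚ) : ℚ)

/-- ℤ_q = W(𝔽_q), the p-typical Witt vectors of 𝔽_q = GaloisField p a. -/
abbrev Zq (p a : ℕ) [Fact p.Prime] := WittVector p (GaloisField p a)

/-- The inclusion ℤ_p = W(𝔽_p) → ℤ_q = W(𝔽_q). -/
def padicToZq (p a : ℕ) [Fact p.Prime] : ℤ_[p] →+* Zq p a :=
  (WittVector.map (algebraMap (ZMod p) (GaloisField p a))).comp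
    (WittVector.equiv p).symm.toRingHom

/-- ℤ_q carries the discrete topology. -/
instance ZqTopology (p a : ℕ) [Fact p.Prime] : TopologicalSpace (Zq p a) := ⊥

/-- Multivariate power series carry the product (coefficient-wise) topology. -/
instance MvPowerSeries.topologicalSpace {σ R : Type*} [TopologicalSpace R] :
    TopologicalSpace (MvPowerSeries σ R) :=
  inferInstanceAs (TopologicalSpace ((σ →₀ ℕ) → R))

/-- Substitution `f(g)` of a multivariate power series `g` with zero constant
coefficient into a one-variable power series `f`. -/
def psSubst {σ A : Type*} [CommRing A] (g : MvPowerSeries σ A) (f : PowerSeries A) :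
    MvPowerSeries σ A :=
  fun u => ∑ k ∈ Finset.range ((u.sum fun _ c => c) + 1),
    PowerSeries.coeff k f * MvPowerSeries.coeff u (g ^ k)

variable (p a m dm : ℕ) [Fact p.Prime]

/-- `R'[[X]]`, regarded as the ring of formal power series over ℤ_q in the
variables {π_x : x ∈ 𝔛} ∪ {X}: the variable `some x` is π_x, and `none` is X. -/
abbrev BigB := MvPowerSeries (Option (Xfrak p m dm)) (Zq p a)

/-- The factor E(π_{(i,j)}·[a_{ij}]·X^j) of E_f, an element of `R'[[X]]`. -/
def EfFactor (aa : Xfrak p m dm → GaloisField p a) (Ep : PowerSeries ℤ_[p])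
    (x : Xfrak p m dm) : BigB p a m dm :=
  psSubst
    (MvPowerSeries.C (WittVector.teichmuller p (aa x))
      * MvPowerSeries.X (some x) * MvPowerSeries.X none ^ x.1.2)
    (PowerSeries.map (padicToZq p a) Ep)

/-- E_f = ∏_{(i,j)∈𝔛} E(π_{(i,j)}·[a_{ij}]·X^j). -/
def Ef (aa : Xfrak p m dm → GaloisField p a) (Ep : PowerSeries ℤ_[p]) : BigB p a m dm :=
  ∏' x : Xfrak p m dm, EfFactor p a m dm aa Ep x

/-- The coefficient η_k ∈ R' of X^k in an element of `R'[[X]]`. -/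
def xCoeff (g : BigB p a m dm) (k : ℕ) : MvPowerSeries (Xfrak p m dm) (Zq p a) :=
  fun u => MvPowerSeries.coeff (Finsupp.mapDomain some u + Finsupp.single none k) g

/-- Iterates σ^l of the Frobenius σ of ℤ_q = W(𝔽_q) (the unique lift of x ↦ x^p). -/
def frobPow (p a : ℕ) [Fact p.Prime] : ℕ → (Zq p a →+* Zq p a)
  | 0 => RingHom.id _
  | (l + 1) => (WittVector.frobenius).comp (frobPow p a l)

/-- The substitution X ↦ X^c on `R'[[X]]` (leaving the variables π_x fixed). -/
def substXpow (c : ℕ) (g : BigB p a m dm) : BigB p a m dm :=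
  fun u => if c ∣ u none then g (Finsupp.update u none (u none / c)) else 0

/-- The product ∏_{l=0}^{k−1} σ^l(E_f)(X^{p^l}): apply σ^l to the ℤ_q-coefficients of
E_f and substitute X ↦ X^{p^l}, then multiply over l = 0, …, k−1. -/
def twistedProd (aa : Xfrak p m dm → GaloisField p a) (Ep : PowerSeries ℤ_[p]) (k : ℕ) :
    BigB p a m dm :=
  ∏ l ∈ Finset.range k,
    substXpow p a m dm (p ^ l)
      (MvPowerSeries.map (frobPow p a l) (Ef p a m dm aa Ep))

namespace MvPowerSeries

variable {σ R : Type*} (w : σ → ℕ)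

/-- Power series in the variables `Option σ`, with `none` playing the role of `X`, all of whose
monomials have `X`-degree at most `c` times their `w`-weight. -/
def xDegLeWeight [Semiring R] (c : ℕ) : Subsemiring (MvPowerSeries (Option σ) R) where
  carrier := {g | ∀ v, coeff v g ≠ 0 → v none ≤ c * Finsupp.weight w v.some}
  zero_mem' := by simp
  one_mem' v hv := by
    obtain rfl : v = 0 := by
      by_contra h
      exact hv (by simp [coeff_one, h])
    simp
  add_mem' {g h} hg hh v hv := by
    rw [map_add] at hv
    by_cases hgv : coeff v g = 0
    · exact hh v (by simpa [hgv] using hv)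
    · exact hg v hgv
  mul_mem' {g h} hg hh v hv := by
    rw [coeff_mul] at hv
    obtain ⟨⟨v₁, v₂⟩, hmem, hne⟩ := Finset.exists_ne_zero_of_sum_ne_zero hv
    obtain rfl : v₁ + v₂ = v := Finset.HasAntidiagonal.mem_antidiagonal.mp hmem
    have h₁ := hg v₁ (left_ne_zero_of_mul hne)
    have h₂ := hh v₂ (right_ne_zero_of_mul hne)
    rw [Finsupp.add_apply, Finsupp.some_add, map_add, Nat.mul_add]
    exact Nat.add_le_add h₁ h₂

variable {w}

lemma mem_xDegLeWeight [Semiring R] {c : ℕ} {g : MvPowerSeries (Option σ) R} :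
    g ∈ xDegLeWeight w c ↔ ∀ v, coeff v g ≠ 0 → v none ≤ c * Finsupp.weight w v.some :=
  Iff.rfl

lemma xDegLeWeight_mono [Semiring R] : Monotone (xDegLeWeight (R := R) w) :=
  fun _ _ hcc' _ hg v hv => (hg v hv).trans (Nat.mul_le_mul_right _ hcc')

lemma isClosed_xDegLeWeight [Semiring R] [TopologicalSpace R] [T1Space R] (c : ℕ) :
    IsClosed (xDegLeWeight (R := R) w c : Set (MvPowerSeries (Option σ) R)) := by
  have hset : (xDegLeWeight (R := R) w c : Set (MvPowerSeries (Option σ) R)) =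
      ⋂ v, {g | v none ≤ c * Finsupp.weight w v.some ∨ coeff v g = 0} := by
    ext g
    simp only [SetLike.mem_coe, mem_xDegLeWeight, Set.mem_iInter, Set.mem_ofPred_eq]
    exact forall_congr' fun v => by tauto
  rw [hset]
  exact isClosed_iInter fun v =>
    isClosed_const.union (isClosed_singleton.preimage (continuous_apply v))

lemma monomial_mem_xDegLeWeight [Semiring R] {c : ℕ} {e : Option σ →₀ ℕ}
    (he : e none ≤ c * Finsupp.weight w e.some) (r : R) :
    monomial e r ∈ xDegLeWeight w c := by
  intro v hv
  obtain rfl : v = e := by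
    by_contra h
    exact hv (by simp [coeff_monomial, h])
  exact he

lemma map_mem_xDegLeWeight {S : Type*} [Semiring R] [Semiring S] (φ : R →+* S) {c : ℕ}
    {g : MvPowerSeries (Option σ) R} (hg : g ∈ xDegLeWeight w c) :
    map φ g ∈ xDegLeWeight w c := fun v hv =>
  hg v fun h => hv (by rw [coeff_map, h, map_zero])

lemma psSubst_mem_xDegLeWeight [CommRing R] {c : ℕ} {g : MvPowerSeries (Option σ) R}
    (hg : g ∈ xDegLeWeight w c) (f : PowerSeries R) :
    psSubst g f ∈ xDegLeWeight w c := by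
  intro v hv
  rw [coeff_apply] at hv
  obtain ⟨n, -, hne⟩ := Finset.exists_ne_zero_of_sum_ne_zero hv
  exact pow_mem hg n v (right_ne_zero_of_mul hne)

end MvPowerSeries

open MvPowerSeries (xDegLeWeight xDegLeWeight_mono isClosed_xDegLeWeight
  monomial_mem_xDegLeWeight map_mem_xDegLeWeight psSubst_mem_xDegLeWeight)

lemma Finsupp.some_mapDomain_some {α M : Type*} [AddCommMonoid M] (u : α →₀ M) :
    (u.mapDomain Option.some).some = u := by
  ext x
  rw [Finsupp.some_apply, Finsupp.mapDomain_apply (Option.some_injective _)]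

instance : DiscreteTopology (Zq p a) := ⟨rfl⟩

/-- The weight of π_{(i,j)} is j, so that `v(π^u) = (weight u)/δ`. -/
abbrev xfrakWeight (x : Xfrak p m dm) : ℕ := x.1.2

variable {p a m dm}

lemma le_vR_of_forall_coeff_ne_zero {p m dm : ℕ} {A : Type*} [CommSemiring A]
    {r : MvPowerSeries (Xfrak p m dm) A} {t : ℚ}
    (h : ∀ u, MvPowerSeries.coeff u r ≠ 0 → t ≤ Finsupp.weight (xfrakWeight p m dm) u) :
    ((t * (p : ℚ) ^ m / dm : ℚ) : WithTop ℚ) ≤ vR p m dm r := by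
  unfold vR
  split_ifs with hr
  · exact le_top
  obtain ⟨u, hu⟩ : ∃ u, MvPowerSeries.coeff u r ≠ 0 := by
    by_contra! h0
    exact hr (MvPowerSeries.ext h0)
  obtain ⟨u', hu', hmin⟩ := Nat.sInf_mem (s := {w : ℕ | ∃ u : Xfrak p m dm →₀ ℕ,
    MvPowerSeries.coeff u r ≠ 0 ∧ w = u.sum fun x k => x.1.2 * k}) ⟨_, u, hu, rfl⟩
  have hweight : (u'.sum fun x k => x.1.2 * k) = Finsupp.weight (xfrakWeight p m dm) u' := by
    simp only [Finsupp.weight_apply, smul_eq_mul, mul_comm]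
  rw [hmin, hweight]
  exact WithTop.coe_le_coe.mpr <|
    div_le_div_of_nonneg_right (mul_le_mul_of_nonneg_right (h u' hu') (by positivity))
      (by positivity)

lemma substXpow_mem_xDegLeWeight {w : Xfrak p m dm → ℕ} {n c : ℕ} {g : BigB p a m dm}
    (hg : g ∈ xDegLeWeight w c) :
    substXpow p a m dm n g ∈ xDegLeWeight w (n * c) := by
  intro v hv
  simp only [MvPowerSeries.coeff_apply, substXpow] at hv
  split_ifs at hv with hdvd
  · have hquot := hg _ hv
    rw [Finsupp.coe_update, Function.update_self, Finsupp.some_update_none] at hquot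
    calc v none = n * (v none / n) := (Nat.mul_div_cancel' hdvd).symm
      _ ≤ n * (c * Finsupp.weight w v.some) := Nat.mul_le_mul_left _ hquot
      _ = n * c * Finsupp.weight w v.some := (Nat.mul_assoc _ _ _).symm
  · exact absurd rfl hv

lemma le_mul_weight_of_coeff_xCoeff_ne_zero {w : Xfrak p m dm → ℕ} {c l : ℕ}
    {g : BigB p a m dm} (hg : g ∈ xDegLeWeight w c) {u : Xfrak p m dm →₀ ℕ}
    (hu : MvPowerSeries.coeff u (xCoeff p a m dm g l) ≠ 0) : l ≤ c * Finsupp.weight w u := by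
  have h := hg _ hu
  rwa [Finsupp.add_apply, Finsupp.mapDomain_of_notMem_range _ _ (by simp),
    Finsupp.single_eq_same, zero_add, Finsupp.some_add, Finsupp.some_mapDomain_some, Finsupp.some_single_none,
    add_zero] at h

lemma EfFactor_mem_xDegLeWeight (aa : Xfrak p m dm → GaloisField p a)
    (Ep : PowerSeries ℤ_[p]) (x : Xfrak p m dm) :
    EfFactor p a m dm aa Ep x ∈ xDegLeWeight (xfrakWeight p m dm) 1 := by
  refine psSubst_mem_xDegLeWeight ?_ _
  have hmono : MvPowerSeries.C (WittVector.teichmuller p (aa x)) * MvPowerSeries.X (some x)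
        * MvPowerSeries.X none ^ x.1.2 =
      MvPowerSeries.monomial (Finsupp.single (some x) 1 + Finsupp.single none x.1.2)
        (WittVector.teichmuller p (aa x)) := by
    rw [MvPowerSeries.X_pow_eq, MvPowerSeries.X, ← MvPowerSeries.monomial_zero_eq_C_apply,
      MvPowerSeries.monomial_mul_monomial, MvPowerSeries.monomial_mul_monomial, zero_add,
      mul_one, mul_one]
  rw [hmono]
  refine monomial_mem_xDegLeWeight ?_ _
  simp [Finsupp.some_add, Finsupp.some_single_some, Finsupp.some_single_none,
    Finsupp.weight_single]

lemma Ef_mem_xDegLeWeight (aa : Xfrak p m dm → GaloisField p a) (Ep : PowerSeries ℤ_[p]) :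
    Ef p a m dm aa Ep ∈ xDegLeWeight (xfrakWeight p m dm) 1 :=
  tprod_mem (isClosed_xDegLeWeight 1) (EfFactor_mem_xDegLeWeight aa Ep)

lemma twistedProd_mem_xDegLeWeight (aa : Xfrak p m dm → GaloisField p a)
    (Ep : PowerSeries ℤ_[p]) (k : ℕ) :
    twistedProd p a m dm aa Ep k ∈ xDegLeWeight (xfrakWeight p m dm) (p ^ (k - 1)) := by
  refine prod_mem fun l hl => ?_
  have hlk : p ^ l * 1 ≤ p ^ (k - 1) := by
    rw [mul_one]
    exact Nat.pow_le_pow_right (Fact.out : p.Prime).pos (by simp at hl; omega)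
  exact xDegLeWeight_mono hlk <| substXpow_mem_xDegLeWeight <|
    map_mem_xDegLeWeight _ (Ef_mem_xDegLeWeight aa Ep)

theorem statement14_general
    (aa : Xfrak p m dm → GaloisField p a)
    (Ep : PowerSeries ℤ_[p])
    (k : ℕ) :
    ∀ l : ℕ,
      (((l : ℚ) * (p : ℚ) ^ m / ((dm : ℚ) * (p : ℚ) ^ (k - 1)) : ℚ) : WithTop ℚ)
        ≤ vR p m dm (xCoeff p a m dm (twistedProd p a m dm aa Ep k) l) := by
  intro l
  have hpow : (0 : ℚ) < (p : ℚ) ^ (k - 1) := pow_pos (mod_cast (Fact.out : p.Prime).pos) _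
  have hrw : (l : ℚ) * (p : ℚ) ^ m / ((dm : ℚ) * (p : ℚ) ^ (k - 1)) =
      l / (p : ℚ) ^ (k - 1) * (p : ℚ) ^ m / dm := by ring
  rw [hrw]
  refine le_vR_of_forall_coeff_ne_zero fun u hu => (div_le_iff₀ hpow).mpr ?_
  rw [mul_comm]
  exact_mod_cast le_mul_weight_of_coeff_xCoeff_ne_zero
    (twistedProd_mem_xDegLeWeight aa Ep k) hu

/-- writing `∏_{l=0}^{k−1} σ^l(E_f)(X^{p^l}) = ∑_l β_l X^l` with
`β_l ∈ R'`, one has `v(β_l) ≥ l/(p^{k−1}·δ)` for all `l ≥ 0`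
(note `l/(p^{k−1}·δ) = l·p^m/(d_m·p^{k−1})`). -/
theorem statement14 (ha : 1 ≤ a) (hdm : 1 ≤ dm) (hpdm : ¬ p ∣ dm)
    (aa : Xfrak p m dm → GaloisField p a)
    (Ep : PowerSeries ℤ_[p]) (hEp : IsArtinHasseZp p Ep)
    (k : ℕ) (hk : 1 ≤ k) :
    ∀ l : ℕ,
      (((l : ℚ) * (p : ℚ) ^ m / ((dm : ℚ) * (p : ℚ) ^ (k - 1)) : ℚ) : WithTop ℚ)
        ≤ vR p m dm (xCoeff p a m dm (twistedProd p a m dm aa Ep k) l) :=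
  statement14_general aa Ep k

end
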